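/- arXiv:0710.2296 — 4 statements merged into one kernel-verified Lean document; each statement's English description precedes it below -/
import Mathlib

section
/- Let H = (V,E) be a graph with maximum degree at most D, where D ≥ 1. Then for every integer k ≥ 1, the number of subsets U ⊆ V with |U| = k such that the induced subgraph H[U] is connected is at most |V|·(D·e)^k / k, where e is Euler's number. -/
/-!
By double counting, `k` times the number of connected `k`-sets is at most the sum over vertices `v`
of the number of connected `k`-sets containing `v`, so it suffices to bound the latter by
`C(kD, k - 1)`. Fix an ordering of every neighbourhood and explore such a set `U` from `v`: starting
from `[v]`, append the vertex of `U` outside the explored list `s` with the smallest slot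
`i * D + j`, where it is the `j`-th neighbour of `s[i]` and `i` is minimal. The slots of the `k - 1`
appended vertices strictly increase and stay below `kD`, and as a set they determine `U`. Finally
`C(kD, k - 1) ≤ (kD)^(k-1) / (k-1)! ≤ D^k k^k / k! ≤ (De)^k`.
-/

open Finset

namespace GreedyExploration

variable {V : Type*}

lemma exists_mem_map_of_exists {α β : Type*} {f : α → β} {l : List α} {p : β → Prop}
    (h : ∃ a ∈ l, p (f a)) : ∃ b ∈ l.map f, p b := by
  simpa using h

variable [DecidableEq V]

section Slot

variable (C : ℕ)

/-- If every list of `M` is padded to length `C`, then `slot C M w` is the position of the first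
occurrence of `w` in the concatenation of `M`. -/
def slot (M : List (List V)) (w : V) : ℕ :=
  M.findIdx (w ∈ ·) * C + (M.getD (M.findIdx (w ∈ ·)) []).idxOf w

variable {C} {M : List (List V)} {w w' : V}

lemma findIdx_lt_length (hw : ∃ l ∈ M, w ∈ l) : M.findIdx (w ∈ ·) < M.length :=
  List.findIdx_lt_length_of_exists (by simpa using hw)

lemma mem_getD_findIdx (hw : ∃ l ∈ M, w ∈ l) : w ∈ M.getD (M.findIdx (w ∈ ·)) [] := by
  rw [List.getD_eq_getElem _ _ (findIdx_lt_length hw)]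
  simpa using List.findIdx_getElem (w := findIdx_lt_length hw)

lemma idxOf_lt (hC : ∀ l ∈ M, l.length ≤ C) (hw : ∃ l ∈ M, w ∈ l) :
    (M.getD (M.findIdx (w ∈ ·)) []).idxOf w < C := by
  refine (List.idxOf_lt_length_iff.2 (mem_getD_findIdx hw)).trans_le (hC _ ?_)
  rw [List.getD_eq_getElem _ _ (findIdx_lt_length hw)]
  exact List.getElem_mem _

lemma slot_lt (hC : ∀ l ∈ M, l.length ≤ C) (hw : ∃ l ∈ M, w ∈ l) :
    slot C M w < M.length * C :=
  calc slot C M w < M.findIdx (w ∈ ·) * C + C := Nat.add_lt_add_left (idxOf_lt hC hw) _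
    _ = (M.findIdx (w ∈ ·) + 1) * C := by ring
    _ ≤ M.length * C := Nat.mul_le_mul_right _ (findIdx_lt_length hw)

lemma slot_div (hC : ∀ l ∈ M, l.length ≤ C) (hw : ∃ l ∈ M, w ∈ l) :
    slot C M w / C = M.findIdx (w ∈ ·) := by
  have hj := idxOf_lt hC hw
  rw [slot, Nat.mul_comm, Nat.mul_add_div (by omega), Nat.div_eq_of_lt hj, Nat.add_zero]

lemma slot_mod (hC : ∀ l ∈ M, l.length ≤ C) (hw : ∃ l ∈ M, w ∈ l) :
    slot C M w % C = (M.getD (M.findIdx (w ∈ ·)) []).idxOf w := by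
  rw [slot, Nat.mul_comm, Nat.mul_add_mod, Nat.mod_eq_of_lt (idxOf_lt hC hw)]

lemma slot_injOn (hC : ∀ l ∈ M, l.length ≤ C) (hw : ∃ l ∈ M, w ∈ l) (hw' : ∃ l ∈ M, w' ∈ l)
    (h : slot C M w = slot C M w') : w = w' := by
  have hi : M.findIdx (w ∈ ·) = M.findIdx (w' ∈ ·) := by
    rw [← slot_div hC hw, ← slot_div hC hw', h]
  refine (List.idxOf_inj (mem_getD_findIdx hw)).1 ?_
  rw [← slot_mod hC hw, h, slot_mod hC hw', hi]

lemma slot_append (hw : ∃ l ∈ M, w ∈ l) (N : List (List V)) :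
    slot C (M ++ N) w = slot C M w := by
  have h := findIdx_lt_length hw
  have he : (M ++ N).findIdx (w ∈ ·) = M.findIdx (w ∈ ·) :=
    List.IsPrefix.findIdx_eq_of_findIdx_lt_length ⟨N, rfl⟩ h
  rw [slot, slot, he, List.getD_append _ _ _ _ h]

lemma length_mul_le_slot_append (hw : ∀ l ∈ M, w ∉ l) (N : List (List V)) :
    M.length * C ≤ slot C (M ++ N) w := by
  have hM : M.findIdx (w ∈ ·) = M.length := List.findIdx_eq_length_of_false (by simpa using hw)
  have hle : M.length ≤ (M ++ N).findIdx (w ∈ ·) := by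
    rw [List.findIdx_append, hM]
    split <;> omega
  exact (Nat.mul_le_mul_right C hle).trans (Nat.le_add_right _ _)

end Slot

section Exploration

variable (L : V → List V) (C : ℕ) (U : Finset V) (v : V)

def frontier (s : List V) : Finset V := {w ∈ U | w ∉ s ∧ ∃ u ∈ s, w ∈ L u}

-- `v` is a junk value, returned only when the frontier is empty.
noncomputable def next (s : List V) : V :=
  if h : (frontier L U s).Nonempty then
    ((frontier L U s).exists_min_image (slot C (s.map L)) h).choose
  else v

noncomputable def explore : ℕ → List V
  | 0 => [v]
  | m + 1 => explore m ++ [next L C U v (explore m)]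

noncomputable def code (m : ℕ) : ℕ :=
  slot C ((explore L C U v m).map L) (next L C U v (explore L C U v m))

/-- `U` is connected from `v` along the arrows `u → w` with `w ∈ L u`, as a cut condition. -/
def ExpandsFrom : Prop := ∀ S ⊂ U, v ∈ S → ∃ u ∈ S, ∃ w ∈ U, w ∉ S ∧ w ∈ L u

variable {L C U v} {s : List V} {w : V} {m : ℕ}

lemma mem_frontier : w ∈ frontier L U s ↔ w ∈ U ∧ w ∉ s ∧ ∃ u ∈ s, w ∈ L u :=
  Finset.mem_filter

lemma next_mem_frontier (h : (frontier L U s).Nonempty) : next L C U v s ∈ frontier L U s := by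
  rw [next, dif_pos h]
  exact ((frontier L U s).exists_min_image (slot C (s.map L)) h).choose_spec.1

lemma slot_next_le (hw : w ∈ frontier L U s) :
    slot C (s.map L) (next L C U v s) ≤ slot C (s.map L) w := by
  rw [next, dif_pos ⟨w, hw⟩]
  exact ((frontier L U s).exists_min_image (slot C (s.map L)) ⟨w, hw⟩).choose_spec.2 w hw

lemma frontier_nonempty (hU : ExpandsFrom L U v) (hvs : v ∈ s) (hs : s.toFinset ⊂ U) :
    (frontier L U s).Nonempty := by
  obtain ⟨u, hu, w, hwU, hws, hw⟩ := hU _ hs (List.mem_toFinset.2 hvs)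
  exact ⟨w, mem_frontier.2 ⟨hwU, by simpa using hws, u, List.mem_toFinset.1 hu, hw⟩⟩

lemma explore_succ :
    explore L C U v (m + 1) = explore L C U v m ++ [next L C U v (explore L C U v m)] :=
  rfl

lemma length_explore : (explore L C U v m).length = m + 1 := by
  induction m with
  | zero => rfl
  | succ m ih => simp [explore_succ, ih]

lemma mem_explore : v ∈ explore L C U v m := by
  induction m with
  | zero => simp [explore]
  | succ m ih => simp [explore_succ, ih]

lemma frontier_explore_nonempty (hU : ExpandsFrom L U v) (hnd : (explore L C U v m).Nodup)
    (hsub : (explore L C U v m).toFinset ⊆ U) (hm : m + 1 < U.card) :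
    (frontier L U (explore L C U v m)).Nonempty := by
  refine frontier_nonempty hU mem_explore (hsub.ssubset_of_ne fun h => ?_)
  have := congrArg Finset.card h
  rw [List.toFinset_card_of_nodup hnd, length_explore] at this
  omega

lemma nodup_explore_and_subset (hU : ExpandsFrom L U v) (hv : v ∈ U) :
    ∀ m < U.card, (explore L C U v m).Nodup ∧ (explore L C U v m).toFinset ⊆ U := by
  intro m
  induction m with
  | zero => simp [explore, hv]
  | succ m ih =>
    intro hm
    obtain ⟨hnd, hsub⟩ := ih (by omega)
    obtain ⟨hwU, hws, -⟩ := mem_frontier.1 <| next_mem_frontier (C := C) (v := v) <|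
      frontier_explore_nonempty hU hnd hsub hm
    rw [explore_succ]
    refine ⟨hnd.append (List.nodup_singleton _) (by simpa using hws), ?_⟩
    simp [Finset.insert_subset_iff, hwU, hsub]

lemma next_explore_mem_frontier (hU : ExpandsFrom L U v) (hv : v ∈ U) (hm : m + 1 < U.card) :
    next L C U v (explore L C U v m) ∈ frontier L U (explore L C U v m) :=
  have ⟨hnd, hsub⟩ := nodup_explore_and_subset hU hv m (by omega)
  next_mem_frontier (frontier_explore_nonempty hU hnd hsub hm)

lemma code_lt (hC : ∀ u, (L u).length ≤ C) (hU : ExpandsFrom L U v) (hv : v ∈ U)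
    (hm : m + 1 < U.card) : code L C U v m < (m + 1) * C := by
  obtain ⟨-, -, hadj⟩ := mem_frontier.1 (next_explore_mem_frontier (C := C) hU hv hm)
  simpa [code, length_explore] using
    slot_lt (List.forall_mem_map.2 fun u _ => hC u) (exists_mem_map_of_exists hadj)

/-- A vertex adjacent to the explored list keeps its slot and was not chosen earlier, so its slot
is larger; a vertex adjacent only to the newest vertex has a slot beyond all earlier ones. -/
lemma code_lt_code_succ (hC : ∀ u, (L u).length ≤ C) (hU : ExpandsFrom L U v) (hv : v ∈ U)
    (hm : m + 2 < U.card) : code L C U v m < code L C U v (m + 1) := by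
  obtain ⟨-, -, hw⟩ :=
    mem_frontier.1 (next_explore_mem_frontier (C := C) hU hv (m := m) (by omega))
  obtain ⟨hw'U, hw's, -⟩ := mem_frontier.1 (next_explore_mem_frontier (C := C) hU hv hm)
  rw [code, code, explore_succ, List.map_append, List.map_singleton]
  rw [explore_succ] at hw'U hw's
  set s := explore L C U v m
  set w := next L C U v s
  by_cases hadj : ∃ u ∈ s, next L C U v (s ++ [w]) ∈ L u
  · have hfr : next L C U v (s ++ [w]) ∈ frontier L U s :=
      mem_frontier.2 ⟨hw'U, fun h => hw's (List.mem_append_left _ h), hadj⟩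
    have hne : w ≠ next L C U v (s ++ [w]) := fun h => hw's (by rw [← h]; simp)
    rw [slot_append (exists_mem_map_of_exists hadj)]
    exact (slot_next_le hfr).lt_of_ne fun h => hne <|
      slot_injOn (List.forall_mem_map.2 fun u _ => hC u) (exists_mem_map_of_exists hw)
        (exists_mem_map_of_exists hadj) h
  · exact (slot_lt (List.forall_mem_map.2 fun u _ => hC u)
      (exists_mem_map_of_exists hw)).trans_le (length_mul_le_slot_append (by simpa using hadj) _)

lemma strictMono_code (hC : ∀ u, (L u).length ≤ C) (hU : ExpandsFrom L U v) (hv : v ∈ U)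
    {n : ℕ} (hn : n < U.card) : StrictMono fun i : Fin n => code L C U v i := by
  have h := strictMonoOn_Iic_of_lt_succ (ψ := code L C U v) (n := n - 1) fun m hm => by
    rw [Order.succ_eq_add_one]
    exact code_lt_code_succ hC hU hv (by omega)
  intro i j hij
  exact h (Set.mem_Iic.2 (by omega)) (Set.mem_Iic.2 (by omega)) hij

lemma explore_eq_of_code_eq {U' : Finset V} (hC : ∀ u, (L u).length ≤ C)
    (hU : ExpandsFrom L U v) (hv : v ∈ U) (hU' : ExpandsFrom L U' v) (hv' : v ∈ U') {n : ℕ}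
    (hn : n < U.card) (hn' : n < U'.card)
    (h : ∀ m < n, code L C U v m = code L C U' v m) :
    explore L C U v n = explore L C U' v n := by
  induction n with
  | zero => rfl
  | succ n ih =>
    have hs := ih (by omega) (by omega) fun m hm => h m (by omega)
    obtain ⟨-, -, hadj⟩ := mem_frontier.1 (next_explore_mem_frontier (C := C) hU hv hn)
    obtain ⟨-, -, hadj'⟩ := mem_frontier.1 (next_explore_mem_frontier (C := C) hU' hv' hn')
    have hslot := h n (by omega)
    rw [code, code, ← hs] at hslot
    rw [← hs] at hadj'
    rw [explore_succ, explore_succ, ← hs, slot_injOn (List.forall_mem_map.2 fun u _ => hC u)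
      (exists_mem_map_of_exists hadj) (exists_mem_map_of_exists hadj') hslot]

lemma toFinset_explore (hU : ExpandsFrom L U v) (hv : v ∈ U) :
    (explore L C U v (U.card - 1)).toFinset = U := by
  have hpos := Finset.card_pos.2 ⟨v, hv⟩
  obtain ⟨hnd, hsub⟩ := nodup_explore_and_subset (C := C) hU hv (U.card - 1) (by omega)
  refine Finset.eq_of_subset_of_card_le hsub ?_
  rw [List.toFinset_card_of_nodup hnd, length_explore]
  omega

end Exploration

section Encoding

noncomputable def codes (L : V → List V) (C : ℕ) (v : V) (n : ℕ) (U : Finset V) : Finset ℕ :=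
  univ.image fun i : Fin n => code L C U v i

variable {L : V → List V} {C : ℕ} {v : V} {k : ℕ} {U U' : Finset V}

lemma codes_mem_powersetCard (hC : ∀ u, (L u).length ≤ C) (hU : ExpandsFrom L U v) (hv : v ∈ U)
    (hk : U.card = k) : codes L C v (k - 1) U ∈ (range (k * C)).powersetCard (k - 1) := by
  have hk1 : 1 ≤ k := hk ▸ Finset.card_pos.2 ⟨v, hv⟩
  rw [mem_powersetCard]
  refine ⟨fun x hx => ?_, ?_⟩
  · obtain ⟨i, -, rfl⟩ := mem_image.1 hx
    have hi := code_lt hC hU hv (m := i) (by omega)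
    exact mem_range.2 (hi.trans_le (Nat.mul_le_mul_right _ (by omega)))
  · rw [codes, card_image_of_injective _ (strictMono_code hC hU hv (by omega)).injective,
      card_univ, Fintype.card_fin]

/-- Codes increase along the exploration, so their set determines them in order, and they
determine each added vertex. -/
lemma eq_of_codes_eq (hC : ∀ u, (L u).length ≤ C) (hU : ExpandsFrom L U v) (hv : v ∈ U)
    (hU' : ExpandsFrom L U' v) (hv' : v ∈ U') (hk : U.card = k) (hk' : U'.card = k)
    (h : codes L C v (k - 1) U = codes L C v (k - 1) U') : U = U' := by
  have hk1 : 1 ≤ k := hk ▸ Finset.card_pos.2 ⟨v, hv⟩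
  have hf : (fun i : Fin (k - 1) => code L C U v i) = fun i : Fin (k - 1) => code L C U' v i :=
    ((strictMono_code hC hU hv (by omega)).range_inj (strictMono_code hC hU' hv' (by omega))).1
      (by simpa [codes] using congrArg ((↑) : Finset ℕ → Set ℕ) h)
  have he := explore_eq_of_code_eq hC hU hv hU' hv' (n := k - 1) (by omega) (by omega)
    fun m hm => congrFun hf ⟨m, hm⟩
  rw [← toFinset_explore (C := C) hU hv, ← toFinset_explore (C := C) hU' hv', hk, hk', he]

theorem card_le_choose_of_expandsFrom (hC : ∀ u, (L u).length ≤ C) (T : Finset (Finset V))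
    (hT : ∀ U ∈ T, U.card = k ∧ v ∈ U ∧ ExpandsFrom L U v) : #T ≤ (k * C).choose (k - 1) :=
  calc #T ≤ #((range (k * C)).powersetCard (k - 1)) := by
        refine card_le_card_of_injOn (codes L C v (k - 1)) (fun U hU => ?_) fun U hU U' hU' h => ?_
        · obtain ⟨hk, hv, hU⟩ := hT U hU
          exact codes_mem_powersetCard hC hU hv hk
        · obtain ⟨hk, hv, hU⟩ := hT U hU
          obtain ⟨hk', hv', hU'⟩ := hT U' hU'
          exact eq_of_codes_eq hC hU hv hU' hv' hk hk' h
    _ = (k * C).choose (k - 1) := by rw [card_powersetCard, card_range]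

end Encoding

end GreedyExploration

open GreedyExploration in
theorem SimpleGraph.expandsFrom_of_connected_induce {V : Type*} [DecidableEq V]
    (G : SimpleGraph V) [G.LocallyFinite] {U : Finset V} (v : V)
    (h : (G.induce (U : Set V)).Connected) :
    ExpandsFrom (fun u => (G.neighborFinset u).toList) U v := by
  intro S hSU hvS
  obtain ⟨x, hxU, hxS⟩ := Finset.exists_of_ssubset hSU
  obtain ⟨p⟩ := h.preconnected ⟨v, hSU.subset hvS⟩ ⟨x, hxU⟩
  obtain ⟨d, -, hd₁, hd₂⟩ := p.exists_boundary_dart {y | y.1 ∈ S} hvS hxS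
  exact ⟨d.fst, hd₁, d.snd, d.snd.2, hd₂, by simpa using d.adj⟩

theorem SimpleGraph.card_le_choose_of_induce_connected {V : Type*} [DecidableEq V]
    (G : SimpleGraph V) [G.LocallyFinite] {D : ℕ} (hD : ∀ u, G.degree u ≤ D) (v : V) (k : ℕ)
    (T : Finset (Finset V)) (hT : ∀ U ∈ T, U.card = k ∧ v ∈ U ∧ (G.induce (U : Set V)).Connected) :
    #T ≤ (k * D).choose (k - 1) :=
  GreedyExploration.card_le_choose_of_expandsFrom (L := fun u => (G.neighborFinset u).toList)
    (fun u => by simpa using hD u) T fun U hU =>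
      have ⟨hk, hv, hconn⟩ := hT U hU
      ⟨hk, hv, G.expandsFrom_of_connected_induce v hconn⟩

theorem Nat.cast_choose_mul_sub_one_le {D : ℕ} (hD : 1 ≤ D) (k : ℕ) :
    ((k * D).choose (k - 1) : ℝ) ≤ (D * Real.exp 1) ^ k := by
  rcases k with _ | n
  · simp
  calc ((((n + 1) * D).choose (n + 1 - 1) : ℕ) : ℝ)
      ≤ (((n + 1) * D : ℕ) : ℝ) ^ n / n.factorial := by
        simpa using Nat.choose_le_pow_div n ((n + 1) * D)
    _ = ((n + 1 : ℕ) : ℝ) ^ (n + 1) / (n + 1).factorial * D ^ n := by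
        rw [Nat.factorial_succ]
        push_cast
        rw [mul_pow, pow_succ]
        field_simp
    _ ≤ Real.exp (n + 1 : ℕ) * D ^ (n + 1) := by
        gcongr
        · exact Real.pow_div_factorial_le_exp _ (Nat.cast_nonneg _) _
        · exact_mod_cast hD
        · omega
    _ = (D * Real.exp 1) ^ (n + 1) := by rw [mul_pow, ← Real.exp_one_pow, mul_comm]

theorem count_connected_subsets
    {V : Type*} [Fintype V] (H : SimpleGraph V) (D : ℕ) (hD : 1 ≤ D)
    (hdeg : ∀ v : V, (H.neighborSet v).ncard ≤ D) (k : ℕ) (hk : 1 ≤ k) :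
    (Nat.card {U : Finset V // U.card = k ∧ (H.induce (↑U : Set V)).Connected} : ℝ) ≤
      (Fintype.card V : ℝ) * (D * Real.exp 1) ^ k / k := by
  classical
  set T : Finset (Finset V) := {U | U.card = k ∧ (H.induce (↑U : Set V)).Connected}
  have hdeg' : ∀ v, H.degree v ≤ D := fun v => by
    rw [← SimpleGraph.card_neighborFinset_eq_degree, ← Set.ncard_coe_finset,
      SimpleGraph.coe_neighborFinset]
    exact hdeg v
  have hcount : #T * k ≤ Fintype.card V * (k * D).choose (k - 1) := by
    refine card_mul_le_card_mul (fun U v => v ∈ U) (fun U hU => ?_) fun v _ =>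
      H.card_le_choose_of_induce_connected hdeg' v k _ fun U hU => ?_
    · simp [bipartiteAbove, (mem_filter.1 hU).2.1]
    · simp only [bipartiteBelow, T, mem_filter, mem_univ, true_and] at hU
      exact ⟨hU.1.1, hU.2, hU.1.2⟩
  rw [Nat.card_eq_fintype_card, Fintype.card_subtype, le_div_iff₀ (by positivity)]
  calc (#T : ℝ) * k ≤ Fintype.card V * (k * D).choose (k - 1) := by exact_mod_cast hcount
    _ ≤ Fintype.card V * (D * Real.exp 1) ^ k := by
        gcongr
        exact Nat.cast_choose_mul_sub_one_le hD k
end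

section
/- Fix constants α > 0, c > 0, an integer Δ ≥ 1, and a function f on the positive integers with f(k) ≥ c for all k, and let K = min{u : for every k ≥ u, k·f(k) > 1/α}. For every ε > 0 there exists n₀ such that for every n ≥ n₀ and every graph G on n vertices with maximum degree at most Δ that is an f-expander, with probability at least 1 − ε under the deletion process with parameter α, every connected component of Ĝ other than the largest one has at most K − 1 vertices. -/
open MeasureTheory

noncomputable def bern (p : ENNReal) : Measure Bool :=
  (PMF.bernoulli (min p 1).toNNReal
    (ENNReal.toNNReal_mono ENNReal.one_ne_top (min_le_right _ _))).toMeasure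

noncomputable def delMeasure (n : ℕ) (α : ℝ) : Measure (Fin n → Bool) :=
  Measure.pi fun _ => bern (ENNReal.ofReal ((n : ℝ) ^ (-α)))

def survivors {n : ℕ} (ω : Fin n → Bool) : Set (Fin n) := {v | ω v = false}

def nbhd {V : Type*} (H : SimpleGraph V) (U : Set V) : Set V :=
  {v | v ∉ U ∧ ∃ u ∈ U, H.Adj u v}

def IsBetaExpander {V : Type*} (H : SimpleGraph V) (β : ℝ) : Prop :=
  ∀ U : Set V, U.Nonempty → (U.ncard : ℝ) ≤ (Nat.card V : ℝ) / 2 →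
    β * U.ncard ≤ ((nbhd H U).ncard : ℝ)

def IsFExpander {V : Type*} (H : SimpleGraph V) (f : ℕ → ℝ) : Prop :=
  ∀ U : Set V, U.Nonempty → (U.ncard : ℝ) ≤ (Nat.card V : ℝ) / 2 →
    f U.ncard * U.ncard ≤ ((nbhd H U).ncard : ℝ)

noncomputable def Kconst (α : ℝ) (f : ℕ → ℝ) : ℕ :=
  sInf {u : ℕ | 1 ≤ u ∧ ∀ k : ℕ, u ≤ k → 1 / α < (k : ℝ) * f k}

/-! If a component `C` of `Ĝ` other than a largest one had `k ≥ K` vertices, then `2k ≤ n`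
(it is disjoint from a component at least as large), `C` is connected in `G`, and every vertex of
`N_G(C)` was deleted, which has probability `p ^ |N_G(C)| ≤ n ^ (-α f(k) k)`. A connected set of
`k` vertices is the vertex set of a closed walk of length at most `2(k - 1)` (walk around a
spanning tree), so there are at most `n (3(Δ+1)²)^k` of them. Since `α k f(k) > 1` for `k ≥ K`
and `α k f(k) ≥ α c k`, there are `δ, β > 0` with `α k f(k) ≥ 1 + δ + β k` for all `k ≥ K`; once
`3(Δ+1)² n^(-β) ≤ 1/2` the union bound over sizes `k` gives at most `∑ₖ n^(-δ) 2^(-k)`. Adding the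
probability that no vertex survives, the failure probability is at most `n^(-α) + 2 n^(-δ)`. -/

open Finset

instance (p : ENNReal) : IsProbabilityMeasure (bern p) := by
  unfold bern; infer_instance

lemma bern_true (p : ENNReal) : bern p {true} = min p 1 := by
  rw [bern, PMF.toMeasure_apply_singleton _ _ (measurableSet_singleton _)]
  exact ENNReal.coe_toNNReal (ne_top_of_le_ne_top ENNReal.one_ne_top (min_le_right _ _))

instance (n : ℕ) (α : ℝ) : IsProbabilityMeasure (delMeasure n α) := by
  unfold delMeasure; infer_instance

def allDeleted {n : ℕ} (s : Set (Fin n)) : Set (Fin n → Bool) := s.pi fun _ => {true}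

lemma mem_allDeleted_iff {n : ℕ} {s : Set (Fin n)} {ω : Fin n → Bool} :
    ω ∈ allDeleted s ↔ Disjoint s (survivors ω) := by
  simp [allDeleted, survivors, Set.disjoint_left]

lemma delMeasure_allDeleted_le (n : ℕ) (α : ℝ) (s : Set (Fin n)) :
    delMeasure n α (allDeleted s) ≤ ENNReal.ofReal ((n : ℝ) ^ (-α * s.ncard)) := by
  obtain ⟨t, rfl⟩ := s.toFinite.exists_finset_coe
  rw [allDeleted, delMeasure, Measure.pi_pi_finset, prod_const, bern_true, Set.ncard_coe_finset,
    Real.rpow_mul (Nat.cast_nonneg n), Real.rpow_natCast,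
    ENNReal.ofReal_pow (Real.rpow_nonneg (Nat.cast_nonneg n) _)]
  exact pow_le_pow_left₀ bot_le (min_le_left _ _) _

namespace SimpleGraph

variable {V : Type*} {G : SimpleGraph V}

-- Delete a vertex `v` keeping the graph connected, and splice `x → v → x` into a closed walk
-- covering the rest, rotated to start at a neighbour `x` of `v`.
theorem Connected.exists_closed_walk_covering [Finite V] (hG : G.Connected) :
    ∃ u, ∃ p : G.Walk u u, (∀ v, v ∈ p.support) ∧ p.length ≤ 2 * (Nat.card V - 1) := by
  classical
  induction h : Nat.card V generalizing V with
  | zero => exact absurd h (Nat.card_pos_iff.mpr ⟨hG.nonempty, ‹_›⟩).ne'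
  | succ m ih =>
    rcases subsingleton_or_nontrivial V with hV | hV
    · obtain ⟨u⟩ := hG.nonempty
      exact ⟨u, .nil, fun v => by simp [Subsingleton.elim v u], by simp⟩
    obtain ⟨v, hv⟩ := hG.exists_connected_induce_compl_singleton_of_finite_nontrivial
    have hcard : Nat.card ({v}ᶜ : Set V) = m := by
      rw [Nat.card_coe_set_eq, Set.ncard_compl, Set.ncard_singleton, h]; rfl
    obtain ⟨u, p, hp, hlen⟩ := ih hv hcard
    obtain ⟨x, hvx⟩ := hG.preconnected.exists_adj_of_nontrivial v
    let p' := p.map (Embedding.induce ({v}ᶜ : Set V)).toHom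
    have hp' : ∀ z, z ≠ v → z ∈ p'.support := fun z hz => by
      rw [Walk.support_map]; exact List.mem_map_of_mem (hp ⟨z, hz⟩)
    refine ⟨x, .cons hvx.symm (.cons hvx (p'.rotate x (hp' x hvx.ne'))), fun z => ?_, ?_⟩
    · by_cases hz : z = v
      · simp [hz]
      · simp only [Walk.support_cons, List.mem_cons]
        exact .inr (.inr ((Walk.mem_support_rotate_iff ..).mpr (hp' z hz)))
    · have : 2 ≤ m + 1 := h ▸ Finite.one_lt_card_iff_nontrivial.mpr hV
      simp only [Walk.length_cons, Walk.length_rotate, p', Walk.length_map]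
      omega

section Fintype

variable [Fintype V] [DecidableEq V] [DecidableRel G.Adj]

theorem card_finsetWalkLength_le {Δ : ℕ} (hdeg : ∀ v, G.degree v ≤ Δ) (ℓ : ℕ) (u v : V) :
    #(G.finsetWalkLength ℓ u v) ≤ Δ ^ ℓ := by
  induction ℓ generalizing u with
  | zero => unfold finsetWalkLength; split_ifs with h <;> [subst h; skip] <;> simp
  | succ ℓ ih =>
    calc #(G.finsetWalkLength (ℓ + 1) u v)
        ≤ ∑ w : G.neighborSet u, #(G.finsetWalkLength ℓ w v) := by
          rw [finsetWalkLength]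
          exact card_biUnion_le.trans (sum_le_sum fun w _ => (card_map _).le)
      _ ≤ ∑ _w : G.neighborSet u, Δ ^ ℓ := sum_le_sum fun w _ => ih w
      _ = G.degree u * Δ ^ ℓ := by
          rw [sum_const, card_univ, card_neighborSet_eq_degree, smul_eq_mul]
      _ ≤ Δ ^ (ℓ + 1) := by rw [pow_succ']; exact Nat.mul_le_mul_right _ (hdeg u)

variable (G) in
def closedWalkSupports (L : ℕ) : Finset (Finset V) :=
  (univ.sigma fun u => G.finsetWalkLengthLT (L + 1) u u).image fun p => p.2.support.toFinset

lemma mem_closedWalkSupports {L : ℕ} {U : Finset V} :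
    U ∈ G.closedWalkSupports L ↔
      ∃ u, ∃ p : G.Walk u u, p.length ≤ L ∧ p.support.toFinset = U := by
  simp [closedWalkSupports, mem_finsetWalkLengthLT_iff]

theorem card_closedWalkSupports_le {Δ : ℕ} (hdeg : ∀ v, G.degree v ≤ Δ) (L : ℕ) :
    #(G.closedWalkSupports L) ≤ Fintype.card V * ((L + 1) * (Δ + 1) ^ L) := by
  refine card_image_le.trans ?_
  rw [card_sigma]
  refine (sum_le_card_nsmul _ _ ((L + 1) * (Δ + 1) ^ L) fun u _ => ?_).trans (by simp)
  rw [show #(G.finsetWalkLengthLT (L + 1) u u) = ∑ ℓ ∈ range (L + 1), #(G.finsetWalkLength ℓ u u)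
    from card_disjiUnion _ _ _]
  refine (sum_le_card_nsmul _ _ ((Δ + 1) ^ L) fun ℓ hℓ =>
    (card_finsetWalkLength_le hdeg ℓ u u).trans ?_).trans (by simp)
  calc Δ ^ ℓ ≤ (Δ + 1) ^ ℓ := Nat.pow_le_pow_left (Nat.le_succ Δ) ℓ
    _ ≤ (Δ + 1) ^ L := Nat.pow_le_pow_right (Nat.succ_pos Δ) (Nat.lt_succ_iff.mp (mem_range.mp hℓ))

theorem card_closedWalkSupports_two_mul_le {Δ : ℕ} (hdeg : ∀ v, G.degree v ≤ Δ) (k : ℕ) :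
    #(G.closedWalkSupports (2 * (k - 1))) ≤ Fintype.card V * (3 * (Δ + 1) ^ 2) ^ k := by
  refine (card_closedWalkSupports_le hdeg _).trans (Nat.mul_le_mul_left _ ?_)
  have h3 : 2 * (k - 1) + 1 ≤ 3 ^ k := by
    have := one_add_mul_le_pow_of_sq_nonneg (a := 2) (by positivity) (by positivity)
      (by positivity) k
    norm_num at this
    omega
  rw [mul_pow, ← pow_mul, mul_comm 2 k]
  exact Nat.mul_le_mul h3 (Nat.pow_le_pow_right (Nat.succ_pos Δ) (by omega))

end Fintype

def NonLargestComponentsAtMost {W : Type*} (H : SimpleGraph W) (m : ℕ) : Prop :=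
  ∃ C₁ : H.ConnectedComponent, (∀ C : H.ConnectedComponent, C.supp.ncard ≤ C₁.supp.ncard) ∧
    ∀ C : H.ConnectedComponent, C ≠ C₁ → C.supp.ncard ≤ m

namespace ConnectedComponent

variable {S : Set V}

lemma disjoint_nbhd_image_supp (C : (G.induce S).ConnectedComponent) :
    Disjoint (nbhd G (Subtype.val '' C.supp)) S := by
  refine Set.disjoint_left.mpr ?_
  rintro v ⟨hv, _, ⟨u, hu, rfl⟩, huv⟩ hvS
  exact hv ⟨⟨v, hvS⟩, C.mem_supp_of_adj_mem_supp hu huv, rfl⟩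

lemma ncard_supp_add_ncard_supp_le [Finite V] {C C' : (G.induce S).ConnectedComponent}
    (h : C ≠ C') : C.supp.ncard + C'.supp.ncard ≤ Nat.card V :=
  calc C.supp.ncard + C'.supp.ncard = (C.supp ∪ C'.supp).ncard :=
        (Set.ncard_union_eq (pairwise_disjoint_supp_connectedComponent _ h)).symm
    _ ≤ Nat.card S := Set.ncard_le_card _
    _ ≤ Nat.card V := Finite.card_subtype_le _

lemma mem_closedWalkSupports_of_coe_eq [Fintype V] [DecidableEq V] [DecidableRel G.Adj]
    (C : (G.induce S).ConnectedComponent) {U : Finset V}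
    (hU : (U : Set V) = Subtype.val '' C.supp) : U ∈ G.closedWalkSupports (2 * (#U - 1)) := by
  obtain ⟨u, p, hp, hlen⟩ := C.connected_toSimpleGraph.exists_closed_walk_covering
  let φ : C.toSimpleGraph →g G := (Embedding.induce S).toHom.comp C.toSimpleGraph_hom
  have hcard : #U = Nat.card C.supp := by
    rw [← Set.ncard_coe_finset, hU, Set.ncard_image_of_injective _ Subtype.val_injective,
      Nat.card_coe_set_eq]
  refine mem_closedWalkSupports.mpr ⟨_, p.map φ, by rwa [Walk.length_map, hcard], ?_⟩
  apply coe_injective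
  ext z
  rw [mem_coe, List.mem_toFinset, Walk.support_map, List.mem_map, hU]
  constructor
  · rintro ⟨x, -, rfl⟩
    exact ⟨x.1, x.2, rfl⟩
  · rintro ⟨y, hy, rfl⟩
    exact ⟨⟨y, hy⟩, hp _, rfl⟩

theorem nonLargestComponentsAtMost_of_forall_not_disjoint_nbhd [Fintype V] [DecidableEq V]
    [DecidableRel G.Adj] (hS : S.Nonempty) {K : ℕ}
    (hK : ∀ U : Finset V, K ≤ #U → 2 * #U ≤ Fintype.card V →
      U ∈ G.closedWalkSupports (2 * (#U - 1)) → ¬ Disjoint (nbhd G U) S) :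
    (G.induce S).NonLargestComponentsAtMost (K - 1) := by
  have : Nonempty (G.induce S).ConnectedComponent := ⟨connectedComponentMk _ ⟨_, hS.some_mem⟩⟩
  obtain ⟨C₁, hC₁⟩ := Finite.exists_max fun C : (G.induce S).ConnectedComponent => C.supp.ncard
  refine ⟨C₁, hC₁, fun C hC => ?_⟩
  obtain ⟨U, hU⟩ := (Set.toFinite (Subtype.val '' C.supp)).exists_finset_coe
  have hcard : #U = C.supp.ncard := by
    rw [← Set.ncard_coe_finset, hU, Set.ncard_image_of_injective _ Subtype.val_injective]
  have hsum := ncard_supp_add_ncard_supp_le hC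
  rw [Nat.card_eq_fintype_card] at hsum
  by_contra! hbig
  exact hK U (by omega) (by linarith [hC₁ C]) (C.mem_closedWalkSupports_of_coe_eq hU)
    (hU ▸ C.disjoint_nbhd_image_supp)

end ConnectedComponent

end SimpleGraph

lemma Kconst_spec {α c : ℝ} (hα : 0 < α) (hc : 0 < c) {f : ℕ → ℝ}
    (hf : ∀ k : ℕ, 0 < k → c ≤ f k) :
    1 ≤ Kconst α f ∧ ∀ k : ℕ, Kconst α f ≤ k → 1 / α < k * f k := by
  have hne : {u : ℕ | 1 ≤ u ∧ ∀ k : ℕ, u ≤ k → 1 / α < (k : ℝ) * f k}.Nonempty := by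
    refine ⟨⌈1 / (α * c)⌉₊ + 1, by omega, fun k hk => ?_⟩
    have hk' : 1 / (α * c) < k := Nat.lt_of_ceil_lt (by omega)
    calc 1 / α = 1 / (α * c) * c := by field_simp
      _ < k * c := by gcongr
      _ ≤ k * f k := by gcongr; exact hf k (by omega)
  exact Nat.sInf_mem hne

-- `g` exceeds `1` by a uniform margin (it is `≥ 2` beyond `2 / a`, and the remaining `k` are
-- finitely many); a convex combination of this with `a k ≤ g k` gives the affine bound.
lemma exists_affine_le_of_one_lt {g : ℕ → ℝ} {K : ℕ} {a : ℝ} (ha : 0 < a)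
    (hgt : ∀ k, K ≤ k → 1 < g k) (hlin : ∀ k, K ≤ k → a * k ≤ g k) :
    ∃ δ > 0, ∃ β > 0, ∀ k, K ≤ k → 1 + δ + β * k ≤ g k := by
  set N := max K ⌈2 / a⌉₊
  obtain ⟨k₀, hk₀, hmin⟩ := (Icc K N).exists_min_image g ⟨K, by simp [N]⟩
  set δ := min (g k₀ - 1) 1
  have hδ : 0 < δ := lt_min (by linarith [hgt k₀ (mem_Icc.mp hk₀).1]) one_pos
  have hgap : ∀ k, K ≤ k → 1 + δ ≤ g k := fun k hk => by
    by_cases hkN : k ≤ N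
    · linarith [min_le_left (g k₀ - 1) 1, hmin k (mem_Icc.mpr ⟨hk, hkN⟩)]
    · have : 2 / a < k := (Nat.le_ceil _).trans_lt
        (by exact_mod_cast (le_max_right _ _).trans_lt (not_le.mp hkN))
      have : 2 ≤ a * k := by rw [div_lt_iff₀' ha] at this; linarith
      linarith [min_le_right (g k₀ - 1) 1, hlin k hk]
  set t := δ / (2 * (1 + δ))
  have ht : 0 < t := by positivity
  have ht1 : t ≤ 1 := by rw [div_le_one (by positivity)]; linarith
  refine ⟨δ / 2, by positivity, t * a, by positivity, fun k hk => ?_⟩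
  calc 1 + δ / 2 + t * a * k = (1 - t) * (1 + δ) + t * (a * k) := by
        simp only [t]; field_simp; ring
    _ ≤ (1 - t) * g k + t * g k := by
        have := mul_le_mul_of_nonneg_left (hgap k hk) (sub_nonneg.mpr ht1)
        have := mul_le_mul_of_nonneg_left (hlin k hk) ht.le
        linarith
    _ = g k := by ring

lemma exists_affine_le_of_Kconst_le {α c : ℝ} (hα : 0 < α) (hc : 0 < c) {f : ℕ → ℝ}
    (hf : ∀ k : ℕ, 0 < k → c ≤ f k) :
    ∃ δ > 0, ∃ β > 0, ∀ k, Kconst α f ≤ k → 1 + δ + β * k ≤ α * (f k * k) := by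
  obtain ⟨hK1, hK⟩ := Kconst_spec hα hc hf
  refine exists_affine_le_of_one_lt (g := fun k => α * (f k * k)) (mul_pos hα hc)
    (fun k hk => ?_) (fun k hk => ?_)
  · have := hK k hk
    rw [div_lt_iff₀ hα] at this
    linarith
  · have := mul_le_mul_of_nonneg_right (hf k (by omega)) (Nat.cast_nonneg (α := ℝ) k)
    have := mul_le_mul_of_nonneg_left this hα.le
    linarith

lemma mul_pow_mul_rpow_neg_le {x M β δ e : ℝ} (k : ℕ) (hx : 1 ≤ x) (hM : 0 ≤ M)
    (hMβ : M * x ^ (-β) ≤ 1 / 2) (he : 1 + δ + β * k ≤ e) :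
    x * M ^ k * x ^ (-e) ≤ x ^ (-δ) * (1 / 2) ^ k := by
  have hx0 : 0 < x := one_pos.trans_le hx
  have hsplit : x ^ (-(1 + δ + β * k)) = x⁻¹ * x ^ (-δ) * (x ^ (-β)) ^ k := by
    rw [← Real.rpow_natCast, ← Real.rpow_mul hx0.le, ← Real.rpow_neg_one, ← Real.rpow_add hx0,
      ← Real.rpow_add hx0]
    ring_nf
  calc x * M ^ k * x ^ (-e) ≤ x * M ^ k * x ^ (-(1 + δ + β * k)) := by gcongr
    _ = x ^ (-δ) * (M * x ^ (-β)) ^ k := by rw [hsplit, mul_pow]; field_simp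
    _ ≤ x ^ (-δ) * (1 / 2) ^ k := by gcongr

section DeletionProcess

open SimpleGraph

variable {n Δ : ℕ} {α β δ : ℝ} {f : ℕ → ℝ} {G : SimpleGraph (Fin n)} [DecidableRel G.Adj]

lemma sum_delMeasure_allDeleted_nbhd_le (hn : 1 ≤ n) (hα : 0 ≤ α)
    (hdeg : ∀ v, G.degree v ≤ Δ) (hG : IsFExpander G f) {k : ℕ} (hk : 1 ≤ k)
    (hβ : ((3 * (Δ + 1) ^ 2 : ℕ) : ℝ) * (n : ℝ) ^ (-β) ≤ 1 / 2)
    (he : 1 + δ + β * k ≤ α * (f k * k)) :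
    ∑ U ∈ (G.closedWalkSupports (2 * (k - 1))).filter (fun U => #U = k ∧ 2 * k ≤ n),
        delMeasure n α (allDeleted (nbhd G U))
      ≤ ENNReal.ofReal ((n : ℝ) ^ (-δ) * (1 / 2) ^ k) := by
  have hn' : (1 : ℝ) ≤ n := by exact_mod_cast hn
  have hterm : ∀ U ∈ (G.closedWalkSupports (2 * (k - 1))).filter (fun U => #U = k ∧ 2 * k ≤ n),
      delMeasure n α (allDeleted (nbhd G U)) ≤ ENNReal.ofReal ((n : ℝ) ^ (-(α * (f k * k)))) := by
    intro U hU
    obtain ⟨-, hUk, h2k⟩ := mem_filter.mp hU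
    have hUcard : (U : Set (Fin n)).ncard = k := by rw [Set.ncard_coe_finset, hUk]
    have hexp := hG U (by rw [coe_nonempty, ← card_pos]; omega)
      (by rw [hUcard, Nat.card_eq_fintype_card, Fintype.card_fin, le_div_iff₀ two_pos]
          exact_mod_cast (by omega : k * 2 ≤ n))
    rw [hUcard] at hexp
    refine (delMeasure_allDeleted_le n α _).trans (ENNReal.ofReal_le_ofReal
      (Real.rpow_le_rpow_of_exponent_le hn' ?_))
    nlinarith
  calc _ ≤ #((G.closedWalkSupports (2 * (k - 1))).filter (fun U => #U = k ∧ 2 * k ≤ n)) •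
        ENNReal.ofReal ((n : ℝ) ^ (-(α * (f k * k)))) := sum_le_card_nsmul _ _ _ hterm
    _ ≤ (n * (3 * (Δ + 1) ^ 2) ^ k) • ENNReal.ofReal ((n : ℝ) ^ (-(α * (f k * k)))) := by
        gcongr
        refine (card_filter_le _ _).trans ?_
        simpa using card_closedWalkSupports_two_mul_le hdeg k
    _ = ENNReal.ofReal (n * ((3 * (Δ + 1) ^ 2 : ℕ) : ℝ) ^ k * (n : ℝ) ^ (-(α * (f k * k)))) := by
        rw [nsmul_eq_mul, ENNReal.ofReal_mul (by positivity), ← Nat.cast_pow, ← Nat.cast_mul,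
          ENNReal.ofReal_natCast]
    _ ≤ ENNReal.ofReal ((n : ℝ) ^ (-δ) * (1 / 2) ^ k) :=
        ENNReal.ofReal_le_ofReal (mul_pow_mul_rpow_neg_le k hn' (Nat.cast_nonneg _) hβ he)

lemma compl_nonLargestComponentsAtMost_subset {K : ℕ} :
    {ω : Fin n → Bool | (G.induce (survivors ω)).NonLargestComponentsAtMost (K - 1)}ᶜ ⊆
      allDeleted Set.univ ∪ ⋃ k ∈ Icc K n,
        ⋃ U ∈ (G.closedWalkSupports (2 * (k - 1))).filter (fun U => #U = k ∧ 2 * k ≤ n),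
          allDeleted (nbhd G U) := by
  intro ω hω
  by_contra hbad
  simp only [Set.mem_union, Set.mem_iUnion, not_or, not_exists, mem_allDeleted_iff] at hbad
  refine hω (ConnectedComponent.nonLargestComponentsAtMost_of_forall_not_disjoint_nbhd ?_
    fun U hKU h2U hU => hbad.2 #U ?_ U ?_)
  · exact Set.nonempty_iff_ne_empty.mpr fun h => hbad.1 (h ▸ Set.disjoint_empty _)
  · simp only [Fintype.card_fin] at h2U
    exact mem_Icc.mpr ⟨hKU, by omega⟩
  · simpa [hU] using h2U

lemma delMeasure_compl_nonLargestComponentsAtMost_le (hn : 1 ≤ n) (hα : 0 ≤ α)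
    (hdeg : ∀ v, G.degree v ≤ Δ) (hG : IsFExpander G f) {K : ℕ} (hK : 1 ≤ K)
    (hβ : ((3 * (Δ + 1) ^ 2 : ℕ) : ℝ) * (n : ℝ) ^ (-β) ≤ 1 / 2)
    (he : ∀ k, K ≤ k → 1 + δ + β * k ≤ α * (f k * k)) :
    delMeasure n α
        {ω : Fin n → Bool | (G.induce (survivors ω)).NonLargestComponentsAtMost (K - 1)}ᶜ
      ≤ ENNReal.ofReal ((n : ℝ) ^ (-α) + 2 * (n : ℝ) ^ (-δ)) := by
  have hn' : (1 : ℝ) ≤ n := by exact_mod_cast hn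
  have hnone : delMeasure n α (allDeleted Set.univ) ≤ ENNReal.ofReal ((n : ℝ) ^ (-α)) := by
    refine (delMeasure_allDeleted_le n α _).trans (ENNReal.ofReal_le_ofReal
      (Real.rpow_le_rpow_of_exponent_le hn' ?_))
    rw [Set.ncard_univ, Nat.card_eq_fintype_card, Fintype.card_fin]
    nlinarith
  have hgeom : ∑ k ∈ Icc K n, (n : ℝ) ^ (-δ) * (1 / 2) ^ k ≤ 2 * (n : ℝ) ^ (-δ) := by
    rw [← mul_sum, mul_comm]
    gcongr
    refine (sum_le_sum_of_subset_of_nonneg (fun k hk => ?_) fun _ _ _ => by positivity).trans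
      (sum_geometric_two_le (n + 1))
    simp only [mem_Icc] at hk
    exact mem_range.mpr (by omega)
  calc _ ≤ delMeasure n α (allDeleted Set.univ) + ∑ k ∈ Icc K n,
        ∑ U ∈ (G.closedWalkSupports (2 * (k - 1))).filter (fun U => #U = k ∧ 2 * k ≤ n),
          delMeasure n α (allDeleted (nbhd G U)) :=
        (measure_mono compl_nonLargestComponentsAtMost_subset).trans ((measure_union_le _ _).trans
          (add_le_add le_rfl ((measure_biUnion_finset_le _ _).trans
            (sum_le_sum fun k _ => measure_biUnion_finset_le _ _))))
    _ ≤ ENNReal.ofReal ((n : ℝ) ^ (-α)) +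
        ∑ k ∈ Icc K n, ENNReal.ofReal ((n : ℝ) ^ (-δ) * (1 / 2) ^ k) := by
        gcongr with k hk
        exact sum_delMeasure_allDeleted_nbhd_le hn hα hdeg hG (hK.trans (mem_Icc.mp hk).1) hβ
          (he k (mem_Icc.mp hk).1)
    _ ≤ ENNReal.ofReal ((n : ℝ) ^ (-α) + 2 * (n : ℝ) ^ (-δ)) := by
        rw [← ENNReal.ofReal_sum_of_nonneg fun _ _ => by positivity,
          ← ENNReal.ofReal_add (by positivity) (by positivity)]
        exact ENNReal.ofReal_le_ofReal (by linarith)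

end DeletionProcess

theorem small_components_bounded_general
    (α c : ℝ) (hα : 0 < α) (hc : 0 < c) (Δ : ℕ)
    (f : ℕ → ℝ) (hf : ∀ k : ℕ, 0 < k → c ≤ f k) :
    ∀ ε : ℝ, 0 < ε → ∃ n₀ : ℕ, ∀ n : ℕ, n₀ ≤ n →
      ∀ G : SimpleGraph (Fin n),
        (∀ v : Fin n, (G.neighborSet v).ncard ≤ Δ) →
        IsFExpander G f →
        1 - ENNReal.ofReal ε ≤ delMeasure n α
          {ω : Fin n → Bool |
            ∃ C₁ : (G.induce (survivors ω)).ConnectedComponent,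
              (∀ C' : (G.induce (survivors ω)).ConnectedComponent,
                C'.supp.ncard ≤ C₁.supp.ncard) ∧
              ∀ C' : (G.induce (survivors ω)).ConnectedComponent,
                C' ≠ C₁ → C'.supp.ncard ≤ Kconst α f - 1} := by
  intro ε hε
  obtain ⟨hK1, -⟩ := Kconst_spec hα hc hf
  obtain ⟨δ, hδ, β, hβ, hgap⟩ := exists_affine_le_of_Kconst_le hα hc hf
  have hdecay : ∀ γ : ℝ, 0 < γ →
      Filter.Tendsto (fun m : ℕ => (m : ℝ) ^ (-γ)) Filter.atTop (nhds 0) :=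
    fun γ hγ => (tendsto_rpow_neg_atTop hγ).comp tendsto_natCast_atTop_atTop
  have hsmall := ((hdecay α hα).add ((hdecay δ hδ).const_mul 2)).eventually
    (ge_mem_nhds (by simpa using hε : (0 : ℝ) + 2 * 0 < ε))
  have hβsmall := ((hdecay β hβ).const_mul ((3 * (Δ + 1) ^ 2 : ℕ) : ℝ)).eventually
    (ge_mem_nhds (by norm_num : _ * (0 : ℝ) < 1 / 2))
  obtain ⟨n₀, hn₀⟩ :=
    Filter.eventually_atTop.mp ((Filter.eventually_ge_atTop 1).and (hsmall.and hβsmall))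
  refine ⟨n₀, fun n hn G hdeg hG => ?_⟩
  classical
  obtain ⟨hn1, hsmall, hβn⟩ := hn₀ n hn
  have hdeg' : ∀ v, G.degree v ≤ Δ := fun v => by
    rw [← SimpleGraph.card_neighborSet_eq_degree, ← Nat.card_eq_fintype_card, Nat.card_coe_set_eq]
    exact hdeg v
  have hbad := (delMeasure_compl_nonLargestComponentsAtMost_le hn1 hα.le hdeg' hG hK1 hβn
    hgap).trans (ENNReal.ofReal_le_ofReal hsmall)
  rw [tsub_le_iff_right]
  exact (measure_univ (μ := delMeasure n α)).symm.le.trans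
    ((measure_univ_le_add_compl _).trans (add_le_add le_rfl hbad))

theorem small_components_bounded
    (α c : ℝ) (hα : 0 < α) (hc : 0 < c) (Δ : ℕ) (hΔ : 1 ≤ Δ)
    (f : ℕ → ℝ) (hf : ∀ k : ℕ, 0 < k → c ≤ f k) :
    ∀ ε : ℝ, 0 < ε → ∃ n₀ : ℕ, ∀ n : ℕ, n₀ ≤ n →
      ∀ G : SimpleGraph (Fin n),
        (∀ v : Fin n, (G.neighborSet v).ncard ≤ Δ) →
        IsFExpander G f →
        1 - ENNReal.ofReal ε ≤ delMeasure n α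
          {ω : Fin n → Bool |
            ∃ C₁ : (G.induce (survivors ω)).ConnectedComponent,
              (∀ C' : (G.induce (survivors ω)).ConnectedComponent,
                C'.supp.ncard ≤ C₁.supp.ncard) ∧
              ∀ C' : (G.induce (survivors ω)).ConnectedComponent,
                C' ≠ C₁ → C'.supp.ncard ≤ Kconst α f - 1} :=
  small_components_bounded_general α c hα hc Δ f hf
end

section
/- Let G be a graph on n vertices with average degree d̃ and Laplacian deviation θ = max{|d̃ − σ_i| : i ≥ 1}, and assume θ < d̃. Then G is an h-expander, where h(i) = (d̃² − θ²)/(θ² + d̃²·i/(n−i)) for 1 ≤ i ≤ ⌊n/2⌋; that is, every subset U of vertices with 1 ≤ |U| ≤ n/2 satisfies |N_G(U)| ≥ h(|U|)·|U|. -/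
open Matrix

-- The combinatorial Laplacian `D - A` of a graph, with real entries.
open Classical in
noncomputable def lapM {n : ℕ} (G : SimpleGraph (Fin n)) : Matrix (Fin n) (Fin n) ℝ :=
  G.lapMatrix ℝ

/-- The average degree of a graph. -/
noncomputable def avgDeg {n : ℕ} (G : SimpleGraph (Fin n)) : ℝ :=
  (∑ v : Fin n, ((G.neighborSet v).ncard : ℝ)) / n

/-- `θ(G) = max {|d̃ - σᵢ| : i ≥ 1}`: the eigenvalues `σᵢ`, `i ≥ 1`, of the Laplacian
(in ascending order, `σ₀ = 0` corresponding to the all-ones eigenvector) are exactly the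
eigenvalues admitting an eigenvector orthogonal to the all-ones vector. -/
noncomputable def lapDeviation {n : ℕ} (G : SimpleGraph (Fin n)) : ℝ :=
  sSup {r : ℝ | ∃ (σ : ℝ) (x : Fin n → ℝ), x ≠ 0 ∧ (∑ v : Fin n, x v) = 0 ∧
    lapM G *ᵥ x = σ • x ∧ r = |avgDeg G - σ|}

/-!
Let `u` be the indicator vector of `U`, `i = |U|`, `m = |N(U)|` and `z = d̃ u - L u`. Since
`(L u) v = deg v · u v - ∑_{w ~ v} u w`, the vector `z` vanishes outside `U ∪ N(U)`, and it
sums to `d̃ i` because `𝟙ᵀ L = 0`; by Cauchy–Schwarz, `(d̃ i)² ≤ (i + m) ‖z‖²`. Writing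
`ū = u - (i/n) 𝟙`, one has `‖z‖² = (d̃ i)²/n + ‖d̃ ū - L ū‖²`. Expanding the zero-sum vector `ū`
in an orthonormal eigenbasis of `L`, only eigenvalues `σ` with a zero-sum eigenvector occur, and
for these `|d̃ - σ| ≤ θ`; hence `‖d̃ ū - L ū‖² ≤ θ² ‖ū‖² = θ² (i - i²/n)`. Solving the resulting
inequality for `m` gives the bound.
-/

noncomputable def centered {ι : Type*} [Fintype ι] (x : ι → ℝ) : ι → ℝ :=
  fun i => x i - (∑ j, x j) / Fintype.card ι

section Centered

variable {ι : Type*} [Fintype ι]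

lemma sum_centered (x : ι → ℝ) : ∑ i, centered x i = 0 := by
  rcases isEmpty_or_nonempty ι with hι | hι
  · simp
  · simp [centered, Finset.sum_sub_distrib, mul_div_cancel₀]

lemma sum_centered_mul_of_sum_eq_zero (x : ι → ℝ) {y : ι → ℝ} (hy : ∑ i, y i = 0) :
    ∑ i, centered x i * y i = ∑ i, x i * y i := by
  simp only [centered, sub_mul, Finset.sum_sub_distrib, ← Finset.mul_sum, hy, mul_zero, sub_zero]

lemma sum_sq_eq_sq_sum_div_add_sum_sq_centered (x : ι → ℝ) :
    ∑ i, x i ^ 2 = (∑ i, x i) ^ 2 / Fintype.card ι + ∑ i, centered x i ^ 2 := by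
  rcases isEmpty_or_nonempty ι with hι | hι
  · simp
  · have hcard : (Fintype.card ι : ℝ) ≠ 0 := by positivity
    simp only [centered, sub_sq, Finset.sum_add_distrib, Finset.sum_sub_distrib, ← Finset.sum_mul,
      ← Finset.mul_sum, Finset.sum_const, Finset.card_univ, nsmul_eq_mul]
    field_simp
    ring

lemma centered_eq_sub_smul_one (x : ι → ℝ) :
    centered x = x - ((∑ j, x j) / Fintype.card ι) • 1 := by
  ext i
  simp [centered]

end Centered

open scoped RealInnerProductSpace in
theorem LinearMap.IsSymmetric.norm_smul_sub_sq_le {E ι : Type*} [NormedAddCommGroup E]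
    [InnerProductSpace ℝ E] [Fintype ι] {T : E →ₗ[ℝ] E} (hT : T.IsSymmetric)
    (b : OrthonormalBasis ι ℝ E) {σ : ι → ℝ} (hb : ∀ j, T (b j) = σ j • b j) {c θ : ℝ} {x : E}
    (h : ∀ j, ⟪b j, x⟫ ≠ 0 → |c - σ j| ≤ θ) :
    ‖c • x - T x‖ ^ 2 ≤ θ ^ 2 * ‖x‖ ^ 2 := by
  have hcoeff : ∀ j, ⟪b j, c • x - T x⟫ = (c - σ j) * ⟪b j, x⟫ := fun j => by
    rw [inner_sub_right, inner_smul_right, ← hT, hb, inner_smul_left]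
    simp only [conj_trivial]
    ring
  have hterm : ∀ j, ((c - σ j) * ⟪b j, x⟫) ^ 2 ≤ θ ^ 2 * ⟪b j, x⟫ ^ 2 := fun j => by
    rcases eq_or_ne ⟪b j, x⟫ 0 with h0 | h0
    · simp [h0]
    · rw [mul_pow]
      exact mul_le_mul_of_nonneg_right (sq_le_sq' (abs_le.1 (h j h0)).1 (abs_le.1 (h j h0)).2)
        (sq_nonneg _)
  rw [← b.sum_sq_inner_right, ← b.sum_sq_inner_right, Finset.mul_sum]
  simp only [hcoeff]
  exact Finset.sum_le_sum fun j _ => hterm j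

namespace Matrix

variable {ι : Type*} [Fintype ι] {A : Matrix ι ι ℝ}

lemma sum_mulVec_eq_zero (hA : A.IsSymm) (h1 : A *ᵥ 1 = 0) (x : ι → ℝ) :
    ∑ i, (A *ᵥ x) i = 0 := by
  rw [← one_dotProduct, dotProduct_mulVec, ← mulVec_transpose, hA.eq, h1, zero_dotProduct]

lemma mulVec_centered (h1 : A *ᵥ 1 = 0) (x : ι → ℝ) : A *ᵥ centered x = A *ᵥ x := by
  rw [centered_eq_sub_smul_one, mulVec_sub, mulVec_smul, h1, smul_zero, sub_zero]

lemma mulVec_centered_eq_smul (hA : A.IsSymm) (h1 : A *ᵥ 1 = 0) {σ : ℝ} {x : ι → ℝ}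
    (hx : A *ᵥ x = σ • x) : A *ᵥ centered x = σ • centered x := by
  have hσ : σ * ∑ i, x i = 0 := by
    rw [Finset.mul_sum, ← sum_mulVec_eq_zero hA h1 x, hx]
    rfl
  rw [mulVec_centered h1, hx, centered_eq_sub_smul_one, smul_sub, smul_smul, mul_div_assoc', hσ,
    zero_div, zero_smul, sub_zero]

lemma sum_sq_smul_sub_mulVec_eq (hA : A.IsSymm) (h1 : A *ᵥ 1 = 0) (c : ℝ) (x : ι → ℝ) :
    ∑ i, (c * x i - (A *ᵥ x) i) ^ 2 =
      (c * ∑ i, x i) ^ 2 / Fintype.card ι + ∑ i, (c * centered x i - (A *ᵥ centered x) i) ^ 2 := by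
  rw [sum_sq_eq_sq_sum_div_add_sum_sq_centered (fun i => c * x i - (A *ᵥ x) i),
    Finset.sum_sub_distrib, ← Finset.mul_sum, sum_mulVec_eq_zero hA h1, sub_zero,
    mulVec_centered h1]
  congr 2 with i
  simp only [centered, Finset.sum_sub_distrib, ← Finset.mul_sum, sum_mulVec_eq_zero hA h1]
  ring

theorem mem_spectrum_of_mulVec_eq_smul {ι R : Type*} [Fintype ι] [DecidableEq ι] [CommRing R]
    {A : Matrix ι ι R} {σ : R} {x : ι → R} (hx : x ≠ 0) (h : A *ᵥ x = σ • x) :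
    σ ∈ spectrum R A := by
  rw [← spectrum_toLin']
  exact (Module.End.hasEigenvalue_of_hasEigenvector
    ⟨Module.End.mem_eigenspace_iff.2 h, hx⟩).mem_spectrum

theorem IsHermitian.sum_sq_smul_sub_mulVec_le [DecidableEq ι] (hA : A.IsHermitian)
    {c θ : ℝ} {x : ι → ℝ}
    (h : ∀ j, x ⬝ᵥ hA.eigenvectorBasis j ≠ 0 → |c - hA.eigenvalues j| ≤ θ) :
    ∑ i, (c * x i - (A *ᵥ x) i) ^ 2 ≤ θ ^ 2 * ∑ i, x i ^ 2 := by
  have hb : ∀ j, toEuclideanLin A (hA.eigenvectorBasis j) =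
      hA.eigenvalues j • hA.eigenvectorBasis j := fun j => by
    rw [toLpLin_apply, hA.mulVec_eigenvectorBasis]
    rfl
  have := (isSymmetric_toEuclideanLin_iff.2 hA).norm_smul_sub_sq_le hA.eigenvectorBasis hb
    (x := WithLp.toLp 2 x) (c := c) (θ := θ)
    fun j hj => h j (by simpa [EuclideanSpace.inner_eq_star_dotProduct] using hj)
  simpa [EuclideanSpace.real_norm_sq_eq] using this

end Matrix

lemma sq_sum_le_card_mul_sum_sq_of_eq_zero {ι : Type*} [Fintype ι] {f : ι → ℝ} (s : Finset ι)
    (hf : ∀ i ∉ s, f i = 0) : (∑ i, f i) ^ 2 ≤ s.card * ∑ i, f i ^ 2 := by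
  rw [← Finset.sum_subset (Finset.subset_univ s) fun i _ hi => hf i hi]
  refine sq_sum_le_card_mul_sum_sq.trans (mul_le_mul_of_nonneg_left ?_ (Nat.cast_nonneg _))
  exact Finset.sum_le_sum_of_subset_of_nonneg (Finset.subset_univ s) fun i _ _ => sq_nonneg (f i)

lemma lapM_eq {n : ℕ} (G : SimpleGraph (Fin n)) [DecidableRel G.Adj] :
    lapM G = G.lapMatrix ℝ := by
  unfold lapM
  congr!

namespace SimpleGraph

variable {V : Type*} [Fintype V] [DecidableEq V] (G : SimpleGraph V) [DecidableRel G.Adj]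

lemma lapMatrix_mulVec_one : G.lapMatrix ℝ *ᵥ 1 = 0 :=
  G.lapMatrix_mulVec_const_eq_zero

lemma lapMatrix_mulVec_apply_eq_zero {x : V → ℝ} {v : V} (hv : x v = 0)
    (hnbr : ∀ w, G.Adj v w → x w = 0) : (G.lapMatrix ℝ *ᵥ x) v = 0 := by
  rw [lapMatrix_mulVec_apply, hv,
    Finset.sum_eq_zero fun w hw => hnbr w ((G.mem_neighborFinset v w).1 hw)]
  ring

lemma sq_mul_ncard_le_mul_sum_sq (c : ℝ) (U : Set V) :
    (c * U.ncard) ^ 2 ≤ (U.ncard + (nbhd G U).ncard) *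
      ∑ v, (c * U.indicator 1 v - (G.lapMatrix ℝ *ᵥ U.indicator 1) v) ^ 2 := by
  classical
  set u : V → ℝ := U.indicator 1
  have hsum : ∑ v, (c * u v - (G.lapMatrix ℝ *ᵥ u) v) = c * U.ncard := by
    rw [Finset.sum_sub_distrib, ← Finset.mul_sum,
      sum_mulVec_eq_zero (G.isSymm_lapMatrix ℝ) G.lapMatrix_mulVec_one, sub_zero]
    simp [u, Set.indicator_apply, Set.ncard_eq_toFinset_card']
  have hcard : ((U ∪ nbhd G U).toFinset.card : ℝ) = U.ncard + (nbhd G U).ncard := by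
    rw [← Set.ncard_eq_toFinset_card',
      Set.ncard_union_eq (Set.disjoint_left.2 fun v hv hv' => hv'.1 hv)]
    push_cast
    rfl
  rw [← hsum, ← hcard]
  refine sq_sum_le_card_mul_sum_sq_of_eq_zero _ fun v hv => ?_
  simp only [Set.mem_toFinset, Set.mem_union, not_or] at hv
  have hu : ∀ w, w ∉ U → u w = 0 := fun w hw => Set.indicator_of_notMem hw 1
  rw [hu v hv.1, lapMatrix_mulVec_apply_eq_zero G (hu v hv.1)
    fun w hvw => hu w fun hw => hv.2 ⟨hv.1, w, hw, hvw.symm⟩]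
  ring

end SimpleGraph

lemma le_lapDeviation {n : ℕ} (G : SimpleGraph (Fin n)) {σ : ℝ} {x : Fin n → ℝ} (hx : x ≠ 0)
    (hsum : ∑ v, x v = 0) (heig : lapM G *ᵥ x = σ • x) : |avgDeg G - σ| ≤ lapDeviation G := by
  refine le_csSup ?_ ⟨σ, x, hx, hsum, heig, rfl⟩
  refine ((finite_real_spectrum (A := lapM G)).image fun σ => |avgDeg G - σ|).bddAbove.mono ?_
  rintro _ ⟨σ, x, hx, -, heig, rfl⟩
  exact ⟨σ, mem_spectrum_of_mulVec_eq_smul hx heig, rfl⟩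

lemma sum_sq_avgDeg_mul_sub_lapMatrix_mulVec_le {n : ℕ} (G : SimpleGraph (Fin n))
    [DecidableRel G.Adj] {x : Fin n → ℝ} (hx : ∑ v, x v = 0) :
    ∑ v, (avgDeg G * x v - (G.lapMatrix ℝ *ᵥ x) v) ^ 2 ≤ lapDeviation G ^ 2 * ∑ v, x v ^ 2 := by
  have hA := G.isHermitian_lapMatrix ℝ
  refine hA.sum_sq_smul_sub_mulVec_le fun j hj => ?_
  let b : Fin n → ℝ := hA.eigenvectorBasis j
  -- `b` is not orthogonal to `x`, so its centred part is a nonzero zero-sum eigenvector.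
  have hbx : ∑ v, centered b v * x v ≠ 0 := by
    rwa [sum_centered_mul_of_sum_eq_zero b hx, ← dotProduct, dotProduct_comm]
  refine le_lapDeviation G (x := centered b) (fun h => hbx (by simp [h])) (sum_centered b) ?_
  rw [lapM_eq]
  exact mulVec_centered_eq_smul (G.isSymm_lapMatrix ℝ) G.lapMatrix_mulVec_one
    (hA.mulVec_eigenvectorBasis j)

lemma div_mul_le_of_sq_mul_le {d θ i m n : ℝ} (hi : 0 < i) (hin : i < n) (hm : 0 ≤ m)
    (h : (d * i) ^ 2 ≤ (i + m) * ((d * i) ^ 2 / n + θ ^ 2 * (i - i ^ 2 / n))) :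
    (d ^ 2 - θ ^ 2) / (θ ^ 2 + d ^ 2 * i / (n - i)) * i ≤ m := by
  have hni : 0 < n - i := sub_pos.2 hin
  have hn : 0 < n := hi.trans hin
  have hcleared : d ^ 2 * i * n ≤ (i + m) * (d ^ 2 * i + θ ^ 2 * (n - i)) := by
    have : (i + m) * ((d * i) ^ 2 / n + θ ^ 2 * (i - i ^ 2 / n)) =
        i / n * ((i + m) * (d ^ 2 * i + θ ^ 2 * (n - i))) := by
      field_simp
    rw [this, div_mul_eq_mul_div, le_div_iff₀ hn] at h
    exact le_of_mul_le_mul_left (by linear_combination h) hi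
  have hD : θ ^ 2 + d ^ 2 * i / (n - i) = (θ ^ 2 * (n - i) + d ^ 2 * i) / (n - i) := by
    field_simp
  rw [hD]
  rcases (show 0 ≤ θ ^ 2 * (n - i) + d ^ 2 * i by positivity).eq_or_lt with h0 | hpos
  · rw [← h0, zero_div, div_zero, zero_mul]
    exact hm
  · rw [div_div_eq_mul_div, div_mul_eq_mul_div, div_le_iff₀ hpos]
    linear_combination hcleared

theorem spectral_expansion_general
    (n : ℕ) (G : SimpleGraph (Fin n)) :
    ∀ U : Set (Fin n), U.Nonempty → (U.ncard : ℝ) ≤ (n : ℝ) / 2 →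
      ((avgDeg G) ^ 2 - (lapDeviation G) ^ 2) /
          ((lapDeviation G) ^ 2 + (avgDeg G) ^ 2 * (U.ncard : ℝ) / ((n : ℝ) - (U.ncard : ℝ)))
        * (U.ncard : ℝ) ≤ ((nbhd G U).ncard : ℝ) := by
  classical
  intro U hU hhalf
  set u : Fin n → ℝ := U.indicator 1
  have hi : (0 : ℝ) < U.ncard := by exact_mod_cast (Set.ncard_pos U.toFinite).2 hU
  have hsum : ∑ v, u v = U.ncard := by simp [u, Set.indicator_apply, Set.ncard_eq_toFinset_card']
  have hsq : ∑ v, centered u v ^ 2 = U.ncard - U.ncard ^ 2 / n := by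
    have hu2 : ∑ v, u v ^ 2 = ∑ v, u v :=
      Finset.sum_congr rfl fun v _ => by by_cases hv : v ∈ U <;> simp [u, hv]
    have := sum_sq_eq_sq_sum_div_add_sum_sq_centered u
    rw [hu2, hsum, Fintype.card_fin] at this
    linarith
  refine div_mul_le_of_sq_mul_le hi (by linarith) (Nat.cast_nonneg _) ?_
  calc (avgDeg G * U.ncard) ^ 2
      ≤ (U.ncard + (nbhd G U).ncard) * ∑ v, (avgDeg G * u v - (G.lapMatrix ℝ *ᵥ u) v) ^ 2 :=
        G.sq_mul_ncard_le_mul_sum_sq _ U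
    _ ≤ _ := by
      rw [sum_sq_smul_sub_mulVec_eq (G.isSymm_lapMatrix ℝ) G.lapMatrix_mulVec_one, hsum,
        Fintype.card_fin, ← hsq]
      gcongr
      exact sum_sq_avgDeg_mul_sub_lapMatrix_mulVec_le G (sum_centered u)

theorem spectral_expansion
    (n : ℕ) (G : SimpleGraph (Fin n))
    (hlt : lapDeviation G < avgDeg G) :
    ∀ U : Set (Fin n), U.Nonempty → (U.ncard : ℝ) ≤ (n : ℝ) / 2 →
      ((avgDeg G) ^ 2 - (lapDeviation G) ^ 2) /
          ((lapDeviation G) ^ 2 + (avgDeg G) ^ 2 * (U.ncard : ℝ) / ((n : ℝ) - (U.ncard : ℝ)))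
        * (U.ncard : ℝ) ≤ ((nbhd G U).ncard : ℝ) :=
  spectral_expansion_general n G
end

section
/- Let G be an (n,d,λ)-graph with λ < d. Then G is an h-expander, where h(1) = d and h(i) = (d² − λ²)/(λ² + d²·i/(n−i)) for 2 ≤ i ≤ ⌊n/2⌋; that is, every subset U of vertices with 1 ≤ |U| ≤ n/2 satisfies |N_G(U)| ≥ h(|U|)·|U|. -/
/-!
Let `W` be the set of vertices outside `U ∪ N(U)`, so that no edge joins `U` and `W`. The
expander mixing lemma, applied to the indicator vectors of `U` and `W`, then gives
`d² |U| |W| ≤ λ² (n - |U|) (n - |W|)`, and substituting `|W| = n - |U| - |N(U)|` is the claimed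
bound. The mixing lemma itself is Cauchy–Schwarz combined with `‖A x‖ ≤ λ ‖x‖` on the orthogonal
complement of the all-ones vector, which the symmetric matrix `A` preserves because it has the
all-ones vector as an eigenvector. A single vertex has exactly `d` neighbours.
-/

open Matrix

open Classical in
noncomputable def adjM {n : ℕ} (G : SimpleGraph (Fin n)) : Matrix (Fin n) (Fin n) ℝ :=
  G.adjMatrix ℝ

-- An `(n,d,λ)`-graph: a `d`-regular graph on `n` vertices all of whose adjacency
-- eigenvalues besides the top eigenvalue `d` (whose eigenvector is the all-ones vector)
-- are at most `λ` in absolute value; equivalently, every eigenvalue admitting an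
-- eigenvector orthogonal to the all-ones vector is at most `λ` in absolute value.
noncomputable def IsNdLambdaGraph (n d : ℕ) (lam : ℝ) (G : SimpleGraph (Fin n)) : Prop :=
  (∀ v : Fin n, (G.neighborSet v).ncard = d) ∧
  ∀ (σ : ℝ) (x : Fin n → ℝ), x ≠ 0 → (∑ v : Fin n, x v) = 0 →
    adjM G *ᵥ x = σ • x → |σ| ≤ lam

namespace LinearMap.IsSymmetric

variable {𝕜 E : Type*} [RCLike 𝕜] [NormedAddCommGroup E] [InnerProductSpace 𝕜 E]
  {T : E →ₗ[𝕜] E} {lam : ℝ}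

theorem mapsTo_orthogonal_span_singleton (hT : T.IsSymmetric) {e : E} {c : 𝕜}
    (he : T e = c • e) : ∀ v ∈ (𝕜 ∙ e)ᗮ, T v ∈ (𝕜 ∙ e)ᗮ := by
  intro v hv
  rw [Submodule.mem_orthogonal_singleton_iff_inner_right] at hv ⊢
  rw [← hT, he, inner_smul_left, hv, mul_zero]

variable [FiniteDimensional 𝕜 E]

theorem norm_apply_sq_le (hT : T.IsSymmetric)
    (hlam : ∀ μ v, Module.End.HasEigenvector T μ v → ‖μ‖ ≤ lam) (x : E) :
    ‖T x‖ ^ 2 ≤ lam ^ 2 * ‖x‖ ^ 2 := by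
  set b := hT.eigenvectorBasis rfl
  rw [← b.repr.norm_map, ← b.repr.norm_map x, EuclideanSpace.norm_sq_eq,
    EuclideanSpace.norm_sq_eq, Finset.mul_sum]
  gcongr with i
  have hμ : |hT.eigenvalues rfl i| ≤ lam := by
    simpa using hlam _ _ (hT.hasEigenvector_eigenvectorBasis rfl i)
  rw [hT.eigenvectorBasis_apply_self_apply, norm_mul, mul_pow, RCLike.norm_ofReal]
  gcongr

theorem norm_apply_sq_le_of_mem (hT : T.IsSymmetric) {S : Submodule 𝕜 E}
    (hS : ∀ v ∈ S, T v ∈ S) (hlam : ∀ μ, ∀ v ∈ S, Module.End.HasEigenvector T μ v → ‖μ‖ ≤ lam)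
    {x : E} (hx : x ∈ S) : ‖T x‖ ^ 2 ≤ lam ^ 2 * ‖x‖ ^ 2 := by
  refine (hT.restrict_invariant hS).norm_apply_sq_le (fun μ v hv => ?_) ⟨x, hx⟩
  refine hlam μ v v.2 ⟨?_, by simpa using hv.2⟩
  simpa [Module.End.mem_eigenspace_iff, Subtype.ext_iff] using hv.1

end LinearMap.IsSymmetric

namespace Matrix

variable {V : Type*} [Fintype V] [DecidableEq V] {A : Matrix V V ℝ} {d lam : ℝ}

theorem mulVec_dotProduct_self_le (hA : A.IsSymm) (h1 : A *ᵥ 1 = d • 1)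
    (hlam : ∀ (σ : ℝ) (x : V → ℝ), x ≠ 0 → ∑ v, x v = 0 → A *ᵥ x = σ • x → |σ| ≤ lam)
    {x : V → ℝ} (hx : ∑ v, x v = 0) : (A *ᵥ x) ⬝ᵥ (A *ᵥ x) ≤ lam ^ 2 * (x ⬝ᵥ x) := by
  have hT := isSymmetric_toEuclideanLin_iff.mpr (isHermitian_iff_isSymm.mpr hA)
  have happly (y : V → ℝ) : toEuclideanLin A (WithLp.toLp 2 y) = WithLp.toLp 2 (A *ᵥ y) := rfl
  have hnorm (y : V → ℝ) : ‖WithLp.toLp 2 y‖ ^ 2 = y ⬝ᵥ y := by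
    rw [← real_inner_self_eq_norm_sq, EuclideanSpace.inner_toLp_toLp, star_trivial]
  have hone : toEuclideanLin A (WithLp.toLp 2 1) = d • WithLp.toLp 2 1 := by
    rw [happly, h1]; rfl
  have hmem : ∀ y : V → ℝ, WithLp.toLp 2 y ∈ (ℝ ∙ WithLp.toLp 2 (1 : V → ℝ))ᗮ ↔ ∑ v, y v = 0 := by
    intro y
    rw [Submodule.mem_orthogonal_singleton_iff_inner_right, EuclideanSpace.inner_toLp_toLp]
    simp [dotProduct_one]
  have heig : ∀ μ : ℝ, ∀ v ∈ (ℝ ∙ WithLp.toLp 2 (1 : V → ℝ))ᗮ,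
      Module.End.HasEigenvector (toEuclideanLin A) μ v → ‖μ‖ ≤ lam := by
    intro μ v hv hμ
    refine hlam μ v.ofLp (by simpa using hμ.2) ((hmem v.ofLp).mp hv) ?_
    exact congrArg WithLp.ofLp (Module.End.mem_eigenspace_iff.mp hμ.1)
  have := hT.norm_apply_sq_le_of_mem (hT.mapsTo_orthogonal_span_singleton hone) heig
    ((hmem x).mpr hx)
  rwa [happly, hnorm, hnorm] at this

theorem dotProduct_mulVec_sq_le (hA : A.IsSymm) (h1 : A *ᵥ 1 = d • 1)
    (hlam : ∀ (σ : ℝ) (x : V → ℝ), x ≠ 0 → ∑ v, x v = 0 → A *ᵥ x = σ • x → |σ| ≤ lam)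
    (y : V → ℝ) {x : V → ℝ} (hx : ∑ v, x v = 0) :
    (y ⬝ᵥ A *ᵥ x) ^ 2 ≤ lam ^ 2 * (y ⬝ᵥ y) * (x ⬝ᵥ x) := by
  have hy : 0 ≤ y ⬝ᵥ y := by simpa using dotProduct_self_star_nonneg y
  calc (y ⬝ᵥ A *ᵥ x) ^ 2 ≤ (y ⬝ᵥ y) * ((A *ᵥ x) ⬝ᵥ (A *ᵥ x)) := by
        have cs := real_inner_mul_inner_self_le (WithLp.toLp 2 y) (WithLp.toLp 2 (A *ᵥ x))
        simp only [EuclideanSpace.inner_toLp_toLp, star_trivial] at cs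
        rwa [sq, dotProduct_comm y]
    _ ≤ (y ⬝ᵥ y) * (lam ^ 2 * (x ⬝ᵥ x)) := by
        gcongr
        exact mulVec_dotProduct_self_le hA h1 hlam hx
    _ = lam ^ 2 * (y ⬝ᵥ y) * (x ⬝ᵥ x) := by ring

theorem expander_mixing [Nonempty V] (hA : A.IsSymm) (h1 : A *ᵥ 1 = d • 1)
    (hlam : ∀ (σ : ℝ) (x : V → ℝ), x ≠ 0 → ∑ v, x v = 0 → A *ᵥ x = σ • x → |σ| ≤ lam)
    (x y : V → ℝ) :
    (y ⬝ᵥ A *ᵥ x - d * (∑ v, y v) * (∑ v, x v) / Fintype.card V) ^ 2 ≤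
      lam ^ 2 * (y ⬝ᵥ y - (∑ v, y v) ^ 2 / Fintype.card V) *
        (x ⬝ᵥ x - (∑ v, x v) ^ 2 / Fintype.card V) := by
  set n : ℝ := (Fintype.card V : ℝ)
  have hn : n ≠ 0 := by simp [n]
  have hvec1 : (1 : V → ℝ) ᵥ* A = d • 1 := by
    rw [← mulVec_transpose, hA.eq, h1]
  have hcenter (z : V → ℝ) : (z - ((∑ v, z v) / n) • 1) ⬝ᵥ 1 = 0 := by
    rw [sub_dotProduct, smul_dotProduct, one_dotProduct_one, dotProduct_one, smul_eq_mul]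
    field_simp
    ring
  have hbil : (y - ((∑ v, y v) / n) • 1) ⬝ᵥ A *ᵥ (x - ((∑ v, x v) / n) • 1) =
      y ⬝ᵥ A *ᵥ x - d * (∑ v, y v) * (∑ v, x v) / n := by
    rw [mulVec_sub, mulVec_smul, h1, smul_smul, dotProduct_sub, dotProduct_smul, hcenter,
      smul_zero, sub_zero, sub_dotProduct, smul_dotProduct, dotProduct_mulVec 1, hvec1,
      smul_dotProduct, one_dotProduct]
    simp only [smul_eq_mul]
    ring
  have hnorm (z : V → ℝ) : (z - ((∑ v, z v) / n) • 1) ⬝ᵥ (z - ((∑ v, z v) / n) • 1) =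
      z ⬝ᵥ z - (∑ v, z v) ^ 2 / n := by
    rw [dotProduct_sub (z - _), dotProduct_smul, hcenter, sub_dotProduct, smul_dotProduct,
      one_dotProduct]
    simp only [smul_eq_mul]
    ring
  rw [← hbil, ← hnorm x, ← hnorm y]
  refine dotProduct_mulVec_sq_le hA h1 hlam _ ?_
  rw [← dotProduct_one, hcenter]

end Matrix

namespace SimpleGraph

variable {V : Type*} (G : SimpleGraph V)

theorem nbhd_singleton (a : V) : nbhd G {a} = G.neighborSet a := by
  ext v
  simp only [nbhd, Set.mem_ofPred_eq, Set.mem_singleton_iff, exists_eq_left, mem_neighborSet]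
  exact ⟨And.right, fun h => ⟨(G.ne_of_adj h).symm, h⟩⟩

theorem disjoint_nbhd (U : Set V) : Disjoint U (nbhd G U) :=
  Set.disjoint_left.mpr fun _ hv hvN => hvN.1 hv

variable [Fintype V] [DecidableRel G.Adj]

theorem isRegularOfDegree_of_ncard_neighborSet {d : ℕ}
    (h : ∀ v, (G.neighborSet v).ncard = d) : G.IsRegularOfDegree d := fun v => by
  rw [← h v, ← card_neighborFinset_eq_degree, neighborFinset, Set.ncard_eq_toFinset_card']

theorem adjMatrix_mulVec_one_of_regular {α : Type*} [NonAssocSemiring α] {d : ℕ}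
    (hd : G.IsRegularOfDegree d) : G.adjMatrix α *ᵥ 1 = (d : α) • 1 := by
  ext v
  simpa using adjMatrix_mulVec_const_apply_of_regular (a := (1 : α)) hd

theorem indicator_dotProduct_adjMatrix_mulVec_indicator_eq_zero {S T : Set V}
    (h : ∀ s ∈ S, ∀ t ∈ T, ¬ G.Adj s t) :
    S.indicator 1 ⬝ᵥ G.adjMatrix ℝ *ᵥ T.indicator 1 = 0 := by
  refine Finset.sum_eq_zero fun s _ => ?_
  by_cases hs : s ∈ S
  · refine mul_eq_zero_of_right _ (Finset.sum_eq_zero fun t _ => ?_)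
    by_cases ht : t ∈ T <;> simp [ht, h s hs t]
  · simp [hs]

end SimpleGraph

theorem Set.sum_indicator_one {V : Type*} [Fintype V] (S : Set V) :
    ∑ v, S.indicator (1 : V → ℝ) v = S.ncard := by
  classical
  simp [Set.indicator_apply, Finset.sum_boole, Set.ncard_eq_toFinset_card']

theorem Set.indicator_one_dotProduct_self {V : Type*} [Fintype V] (S : Set V) :
    S.indicator (1 : V → ℝ) ⬝ᵥ S.indicator 1 = S.ncard := by
  rw [← S.sum_indicator_one]
  refine Finset.sum_congr rfl fun v _ => ?_
  by_cases hv : v ∈ S <;> simp [hv]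

theorem le_of_mixing_bound {n u m w d lam : ℝ} (hn : 0 < n) (hu : 0 ≤ u) (hm : 0 ≤ m)
    (hw : 0 ≤ w) (hsum : u + m + w = n)
    (hmix : (d * u * w / n) ^ 2 ≤ lam ^ 2 * (u - u ^ 2 / n) * (w - w ^ 2 / n)) :
    u * (n - u) * (d ^ 2 - lam ^ 2) ≤ m * (lam ^ 2 * (n - u) + d ^ 2 * u) := by
  have hmix' : u * w * (d ^ 2 * u * w) ≤ u * w * (lam ^ 2 * (n - u) * (n - w)) := by
    have := mul_le_mul_of_nonneg_right hmix (sq_nonneg n)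
    field_simp at this
    linarith
  obtain huw | huw := (mul_nonneg hu hw).eq_or_lt
  · rcases mul_eq_zero.mp huw.symm with rfl | rfl
    · simp only [zero_mul, mul_zero]
      positivity
    · have hm' : m = n - u := by linarith
      subst hm'
      linear_combination mul_nonneg (mul_nonneg hm (sq_nonneg lam)) hn.le
  · have hdiv := le_of_mul_le_mul_left hmix' huw
    have hw' : w = n - u - m := by linarith
    subst hw'
    linear_combination hdiv

theorem div_mul_le_of_mul_le {n u m d lam : ℝ} (hnu : 0 < n - u) (hu : 0 ≤ u) (hm : 0 ≤ m)
    (h : u * (n - u) * (d ^ 2 - lam ^ 2) ≤ m * (lam ^ 2 * (n - u) + d ^ 2 * u)) :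
    (d ^ 2 - lam ^ 2) / (lam ^ 2 + d ^ 2 * u / (n - u)) * u ≤ m := by
  have hden : lam ^ 2 + d ^ 2 * u / (n - u) = (lam ^ 2 * (n - u) + d ^ 2 * u) / (n - u) := by
    field_simp
  rw [hden, div_div_eq_mul_div, div_mul_eq_mul_div]
  refine div_le_of_le_mul₀ (by positivity) hm ?_
  linarith

theorem SimpleGraph.ncard_mul_le_ncard_nbhd_mul {V : Type*} [Fintype V] [DecidableEq V]
    [Nonempty V] {G : SimpleGraph V} [DecidableRel G.Adj] {d : ℕ} {lam : ℝ}
    (hd : G.IsRegularOfDegree d)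
    (hlam : ∀ (σ : ℝ) (x : V → ℝ), x ≠ 0 → ∑ v, x v = 0 → G.adjMatrix ℝ *ᵥ x = σ • x → |σ| ≤ lam)
    (U : Set V) :
    (U.ncard : ℝ) * (Fintype.card V - U.ncard) * ((d : ℝ) ^ 2 - lam ^ 2) ≤
      (nbhd G U).ncard * (lam ^ 2 * (Fintype.card V - U.ncard) + (d : ℝ) ^ 2 * U.ncard) := by
  set W := (U ∪ nbhd G U)ᶜ
  have hnoedge : ∀ s ∈ U, ∀ t ∈ W, ¬ G.Adj s t := fun s hs t ht hst =>
    ht (Or.inr ⟨fun htU => ht (Or.inl htU), s, hs, hst⟩)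
  have hmix := Matrix.expander_mixing G.isSymm_adjMatrix (G.adjMatrix_mulVec_one_of_regular hd)
    hlam (W.indicator 1) (U.indicator 1)
  rw [G.indicator_dotProduct_adjMatrix_mulVec_indicator_eq_zero hnoedge, zero_sub, neg_sq,
    Set.sum_indicator_one, Set.sum_indicator_one, Set.indicator_one_dotProduct_self,
    Set.indicator_one_dotProduct_self] at hmix
  have hcard : U.ncard + (nbhd G U).ncard + W.ncard = Fintype.card V := by
    rw [← Set.ncard_union_eq (G.disjoint_nbhd U), Set.ncard_add_ncard_compl,
      Nat.card_eq_fintype_card]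
  exact le_of_mixing_bound (w := W.ncard) (by simp [Fintype.card_pos]) (by positivity)
    (by positivity) (by positivity) (by exact_mod_cast hcard) hmix

theorem ndlambda_expansion_general
    (n d : ℕ) (lam : ℝ) (G : SimpleGraph (Fin n))
    (hG : IsNdLambdaGraph n d lam G) :
    ∀ U : Set (Fin n), U.Nonempty → (U.ncard : ℝ) ≤ (n : ℝ) / 2 →
      (if U.ncard = 1 then (d : ℝ)
        else ((d : ℝ) ^ 2 - lam ^ 2) /
          (lam ^ 2 + (d : ℝ) ^ 2 * (U.ncard : ℝ) / ((n : ℝ) - (U.ncard : ℝ))))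
        * (U.ncard : ℝ) ≤ ((nbhd G U).ncard : ℝ) := by
  intro U hU hUn
  classical
  split_ifs with hone
  · obtain ⟨a, rfl⟩ := Set.ncard_eq_one.mp hone
    simp [G.nbhd_singleton, hG.1 a]
  · have : Nonempty (Fin n) := ⟨hU.some⟩
    have hu : (1 : ℝ) ≤ U.ncard := by exact_mod_cast (Set.ncard_pos U.toFinite).mpr hU
    have key := G.ncard_mul_le_ncard_nbhd_mul (G.isRegularOfDegree_of_ncard_neighborSet hG.1) hG.2 U
    rw [Fintype.card_fin] at key
    exact div_mul_le_of_mul_le (by linarith) (by positivity) (by positivity) key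

theorem ndlambda_expansion
    (n d : ℕ) (lam : ℝ) (G : SimpleGraph (Fin n))
    (hG : IsNdLambdaGraph n d lam G) (h0 : 0 ≤ lam) (hlt : lam < (d : ℝ)) :
    ∀ U : Set (Fin n), U.Nonempty → (U.ncard : ℝ) ≤ (n : ℝ) / 2 →
      (if U.ncard = 1 then (d : ℝ)
        else ((d : ℝ) ^ 2 - lam ^ 2) /
          (lam ^ 2 + (d : ℝ) ^ 2 * (U.ncard : ℝ) / ((n : ℝ) - (U.ncard : ℝ))))
        * (U.ncard : ℝ) ≤ ((nbhd G U).ncard : ℝ) :=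
  ndlambda_expansion_general n d lam G hG
end
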